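/- Let M > 0, let W ∈ C⁰([0,δ]) take values in [0,M], let t̃, t ∈ [0,δ] with t̃ ≥ t and δ‖λ_x‖_{C⁰} ≤ 1/2, and fix x ∈ [0,1]. Let ξ₃ and ξ̃₃ solve dξ/ds = λ(ξ(s),W(s)) with ξ₃(t)=x and ξ̃₃(t̃)=x, remaining in [0,1], and let α, α̃ ∈ [0,δ] be such that ξ₃(α)=0 and ξ̃₃(α̃)=0. Then there exists a constant C, depending only on M, δ, and the C¹-norm of λ on [0,1]×[0,M] (and not on x, t, t̃), such that sup_{s∈[α̃,t]} |ξ̃₃(s) − ξ₃(s)| ≤ C|t̃ − t| and |α̃ − α| ≤ C|t̃ − t|. -/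

import Mathlib

/-!
On the compact set `[0,1] × [0,M]` the velocity satisfies `0 < m ≤ λ ≤ Λ` and is `K`-Lipschitz
in `x`. The characteristic `ξ̃₃` ends at `x` at time `t̃`, so at time `t` it lies within
`Λ (t̃ - t)` of `x = ξ₃(t)`; backward Grönwall spreads this gap over `[α̃, t]` with the factor
`exp (K δ)`. When `α̃ ≤ t`, characteristics cannot cross, so `α ≤ α̃`, and
`m (α̃ - α) ≤ ξ₃(α̃) = |ξ̃₃(α̃) - ξ₃(α̃)|` bounds the hitting times. When `α̃ > t` the interval
`[α̃, t]` is empty and `m (t - α) ≤ x ≤ Λ (t̃ - α̃)` gives the hitting-time bound directly.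
-/

open MeasureTheory Set Filter Function intervalIntegral

noncomputable section

/-- Total mass `W(t) = ∫₀¹ ρ(t,x) dx`. -/
def totalMass (ρ : ℝ → ℝ → ℝ) (t : ℝ) : ℝ := ∫ x in (0:ℝ)..1, ρ t x

/-- The velocity `λ` is `C¹` on `[0,1] × [0,∞)` and positive there. -/
def VelocityHyp (lam : ℝ → ℝ → ℝ) : Prop :=
  ContDiffOn ℝ 1 (uncurry lam) (Icc (0:ℝ) 1 ×ˢ Ici (0:ℝ)) ∧
    ∀ x ∈ Icc (0:ℝ) 1, ∀ w ∈ Ici (0:ℝ), 0 < lam x w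

/-- `f` is measurable and essentially bounded on `(a,b)`, i.e. `f ∈ L^∞(a,b)`. -/
def MeasBdd (a b : ℝ) (f : ℝ → ℝ) : Prop :=
  Measurable f ∧ ∃ C : ℝ, ∀ᵐ x : ℝ, x ∈ Ioo a b → |f x| ≤ C

/-- `f ∈ L^∞(a,b)` and `f` is nonnegative a.e. on `(a,b)`. -/
def MeasBddNonneg (a b : ℝ) (f : ℝ → ℝ) : Prop :=
  MeasBdd a b f ∧ ∀ᵐ x : ℝ, x ∈ Ioo a b → 0 ≤ f x

/-- `ρ ∈ C⁰([0,T]; L^p(0,1))`. -/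
def ContInLp (T p : ℝ) (ρ : ℝ → ℝ → ℝ) : Prop :=
  ∀ t₀ ∈ Icc (0:ℝ) T,
    Tendsto (fun t => ∫ x in (0:ℝ)..1, |ρ t x - ρ t₀ x| ^ p)
      (nhdsWithin t₀ (Icc (0:ℝ) T)) (nhds 0)

/-- Hidden regularity: `ρ ∈ C⁰([0,1]; L^p(0,T))`. -/
def ContInX (T p : ℝ) (ρ : ℝ → ℝ → ℝ) : Prop :=
  ∀ x₀ ∈ Icc (0:ℝ) 1,
    Tendsto (fun x => ∫ t in (0:ℝ)..T, |ρ t x - ρ t x₀| ^ p)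
      (nhdsWithin x₀ (Icc (0:ℝ) 1)) (nhds 0)

/-- `ρ ∈ L^∞((0,T) × (0,1))` (with joint measurability). -/
def BddOnRect (T : ℝ) (ρ : ℝ → ℝ → ℝ) : Prop :=
  Measurable (uncurry ρ) ∧
    ∃ C : ℝ, ∀ᵐ q : ℝ × ℝ, q ∈ Ioo (0:ℝ) T ×ˢ Ioo (0:ℝ) 1 → |ρ q.1 q.2| ≤ C

/-- Weak solution of `ρ_t + (ρ λ(x, W(t)))_x = 0`, `ρ(0,·) = ρ₀`,
`ρ(·,0) λ(0, W(·)) = u`, in the sense of Coron's definition. -/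
structure IsWeakSolution (lam : ℝ → ℝ → ℝ) (T : ℝ) (ρ₀ u : ℝ → ℝ)
    (ρ : ℝ → ℝ → ℝ) : Prop where
  contL1 : ContInLp T 1 ρ
  bdd : BddOnRect T ρ
  weak : ∀ τ ∈ Icc (0:ℝ) T, ∀ φ : ℝ → ℝ → ℝ,
    ContDiff ℝ 1 (uncurry φ) →
    (∀ x ∈ Icc (0:ℝ) 1, φ τ x = 0) →
    (∀ t ∈ Icc (0:ℝ) τ, φ t 1 = 0) →
    (∫ t in (0:ℝ)..τ, ∫ x in (0:ℝ)..1,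
        ρ t x * (deriv (fun s => φ s x) t
          + lam x (totalMass ρ t) * deriv (fun y => φ t y) x))
      + (∫ t in (0:ℝ)..τ, u t * φ t 0)
      + (∫ x in (0:ℝ)..1, ρ₀ x * φ 0 x) = 0

/-- `L¹` norm on `(a,b)`. -/
def L1Norm (a b : ℝ) (f : ℝ → ℝ) : ℝ := ∫ x in a..b, |f x|

/-- `L^p` norm on `(a,b)`. -/
def LpNorm (p a b : ℝ) (f : ℝ → ℝ) : ℝ := (∫ x in a..b, |f x| ^ p) ^ (1 / p)

/-- `L^∞` norm (essential supremum) on `(a,b)`. -/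
def LinfNorm (a b : ℝ) (f : ℝ → ℝ) : ℝ :=
  essSup (fun x => |f x|) (volume.restrict (Ioo a b))

/-- `λ̄(M)`: infimum of `λ` over `[0,1] × [0,M]`. -/
def lamInf (lam : ℝ → ℝ → ℝ) (M : ℝ) : ℝ :=
  sInf ((fun q : ℝ × ℝ => lam q.1 q.2) '' (Icc (0:ℝ) 1 ×ˢ Icc (0:ℝ) M))

/-- `‖λ‖_{C⁰}`: supremum of `|λ|` over `[0,1] × [0,M]`. -/
def lamSup (lam : ℝ → ℝ → ℝ) (M : ℝ) : ℝ :=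
  sSup ((fun q : ℝ × ℝ => |lam q.1 q.2|) '' (Icc (0:ℝ) 1 ×ˢ Icc (0:ℝ) M))

/-- The partial derivative `λ_x` (in the space variable). -/
def lamx (lam : ℝ → ℝ → ℝ) (x w : ℝ) : ℝ :=
  derivWithin (fun y => lam y w) (Icc (0:ℝ) 1) x

/-- The partial derivative `λ_W` (in the total-mass variable). -/
def lamW (lam : ℝ → ℝ → ℝ) (x w : ℝ) : ℝ :=
  derivWithin (fun v => lam x v) (Ici (0:ℝ)) w

/-- `‖λ_x‖_{C⁰}`: supremum of `|λ_x|` over `[0,1] × [0,M]`. -/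
def lamxSup (lam : ℝ → ℝ → ℝ) (M : ℝ) : ℝ :=
  sSup ((fun q : ℝ × ℝ => |lamx lam q.1 q.2|) '' (Icc (0:ℝ) 1 ×ˢ Icc (0:ℝ) M))

/-- `‖λ_W‖_{C⁰}`: supremum of `|λ_W|` over `[0,1] × [0,M]`. -/
def lamWSup (lam : ℝ → ℝ → ℝ) (M : ℝ) : ℝ :=
  sSup ((fun q : ℝ × ℝ => |lamW lam q.1 q.2|) '' (Icc (0:ℝ) 1 ×ˢ Icc (0:ℝ) M))

open scoped NNReal

lemma VelocityHyp.exists_speed_bounds {lam : ℝ → ℝ → ℝ} (hlam : VelocityHyp lam) {M : ℝ}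
    (hM : 0 ≤ M) :
    ∃ m > 0, ∃ Λ, ∀ y ∈ Icc (0:ℝ) 1, ∀ w ∈ Icc 0 M, lam y w ∈ Icc m Λ := by
  have hK : IsCompact (Icc (0:ℝ) 1 ×ˢ Icc 0 M) := isCompact_Icc.prod isCompact_Icc
  have hne : (Icc (0:ℝ) 1 ×ˢ Icc 0 M).Nonempty :=
    ⟨(0, 0), ⟨left_mem_Icc.2 zero_le_one, left_mem_Icc.2 hM⟩⟩
  have hcont : ContinuousOn (uncurry lam) (Icc (0:ℝ) 1 ×ˢ Icc 0 M) :=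
    hlam.1.continuousOn.mono (prod_mono subset_rfl Icc_subset_Ici_self)
  obtain ⟨qm, hqm, hmin⟩ := hK.exists_isMinOn hne hcont
  obtain ⟨_, _, hmax⟩ := hK.exists_isMaxOn hne hcont
  exact ⟨_, hlam.2 qm.1 hqm.1 qm.2 hqm.2.1, _,
    fun y hy w hw => ⟨hmin (mk_mem_prod hy hw), hmax (mk_mem_prod hy hw)⟩⟩

lemma VelocityHyp.exists_lipschitzOnWith {lam : ℝ → ℝ → ℝ} (hlam : VelocityHyp lam) (M : ℝ) :
    ∃ K : ℝ≥0, ∀ w ∈ Icc 0 M, LipschitzOnWith K (lam · w) (Icc 0 1) := by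
  obtain ⟨K, hK⟩ := (hlam.1.mono (prod_mono subset_rfl Icc_subset_Ici_self)).exists_lipschitzOnWith
    one_ne_zero ((convex_Icc 0 1).prod (convex_Icc 0 M)) (isCompact_Icc.prod isCompact_Icc)
  refine ⟨K, fun w hw => ?_⟩
  have h := hK.comp (LipschitzWith.prodMk_right w).lipschitzOnWith fun y hy => ⟨hy, hw⟩
  rwa [mul_one] at h

theorem dist_le_of_trajectories_ODE_of_mem_left {E : Type*} [NormedAddCommGroup E]
    [NormedSpace ℝ E] {v : ℝ → E → E} {s : ℝ → Set E} {K : ℝ≥0} {f g : ℝ → E} {a b δ : ℝ}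
    (hv : ∀ t ∈ Ioc a b, LipschitzOnWith K (v t) (s t))
    (hf : ContinuousOn f (Icc a b))
    (hf' : ∀ t ∈ Ioc a b, HasDerivWithinAt f (v t (f t)) (Iic t) t)
    (hfs : ∀ t ∈ Ioc a b, f t ∈ s t)
    (hg : ContinuousOn g (Icc a b))
    (hg' : ∀ t ∈ Ioc a b, HasDerivWithinAt g (v t (g t)) (Iic t) t)
    (hgs : ∀ t ∈ Ioc a b, g t ∈ s t)
    (hb : dist (f b) (g b) ≤ δ) :
    ∀ t ∈ Icc a b, dist (f t) (g t) ≤ δ * Real.exp (K * (b - t)) := by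
  have hv' : ∀ t ∈ Ico (-b) (-a), LipschitzOnWith K (Neg.neg ∘ v (-t)) (s (-t)) := fun t ht => by
    rw [← one_mul K]
    exact LipschitzWith.id.neg.comp_lipschitzOnWith (hv _ ⟨lt_neg.mp ht.2, neg_le.mp ht.1⟩)
  have hmt1 : MapsTo Neg.neg (Icc (-b) (-a)) (Icc a b) :=
    fun _ ht ↦ ⟨le_neg.mp ht.2, neg_le.mp ht.1⟩
  have hmt2 : MapsTo Neg.neg (Ico (-b) (-a)) (Ioc a b) :=
    fun _ ht ↦ ⟨lt_neg.mp ht.2, neg_le.mp ht.1⟩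
  have hmt3 (t : ℝ) : MapsTo Neg.neg (Ici t) (Iic (-t)) :=
    fun _ ht ↦ mem_Iic.mpr <| neg_le_neg ht
  have reverse {h : ℝ → E} (h' : ∀ t ∈ Ioc a b, HasDerivWithinAt h (v t (h t)) (Iic t) t) :
      ∀ t ∈ Ico (-b) (-a), HasDerivWithinAt (h ∘ Neg.neg) ((Neg.neg ∘ v (-t)) ((h ∘ Neg.neg) t))
        (Ici t) t := fun t ht => by
    simpa [Function.comp] using
      (h' (-t) (hmt2 ht)).scomp t (hasDerivAt_neg t).hasDerivWithinAt (hmt3 t)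
  intro t ht
  have := dist_le_of_trajectories_ODE_of_mem hv' (hf.comp continuousOn_neg hmt1) (reverse hf')
    (fun _ ht ↦ hfs _ (hmt2 ht)) (hg.comp continuousOn_neg hmt1) (reverse hg')
    (fun _ ht ↦ hgs _ (hmt2 ht)) (by simpa using hb) (-t) ⟨neg_le_neg ht.2, neg_le_neg ht.1⟩
  simpa [sub_eq_neg_add, add_comm] using this

structure IsSolutionOn (v : ℝ → ℝ → ℝ) (S : Set ℝ) (f : ℝ → ℝ) (a b : ℝ) : Prop where
  hasDerivAt : ∀ t ∈ Icc a b, HasDerivAt f (v t (f t)) t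
  mem : ∀ t ∈ Icc a b, f t ∈ S

namespace IsSolutionOn

variable {v : ℝ → ℝ → ℝ} {S : Set ℝ} {f g : ℝ → ℝ} {a b c d m Λ : ℝ} {K : ℝ≥0}

lemma mono (hf : IsSolutionOn v S f a b) (hac : a ≤ c) (hdb : d ≤ b) : IsSolutionOn v S f c d :=
  ⟨fun t ht => hf.hasDerivAt t (Icc_subset_Icc hac hdb ht),
    fun t ht => hf.mem t (Icc_subset_Icc hac hdb ht)⟩

lemma continuousOn (hf : IsSolutionOn v S f a b) : ContinuousOn f (Icc a b) :=
  fun t ht => (hf.hasDerivAt t ht).continuousAt.continuousWithinAt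

lemma mul_sub_le_sub (hf : IsSolutionOn v S f a b) (hm : ∀ t ∈ Icc a b, ∀ y ∈ S, m ≤ v t y)
    {s₁ s₂ : ℝ} (hs₁ : s₁ ∈ Icc a b) (hs₂ : s₂ ∈ Icc a b) (h : s₁ ≤ s₂) :
    m * (s₂ - s₁) ≤ f s₂ - f s₁ := by
  refine (convex_Icc a b).mul_sub_le_image_sub_of_le_deriv hf.continuousOn
    (fun t ht => ?_) (fun t ht => ?_) s₁ hs₁ s₂ hs₂ h <;>
  rw [interior_Icc] at ht <;> have hd := hf.hasDerivAt t (Ioo_subset_Icc_self ht)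
  · exact hd.differentiableAt.differentiableWithinAt
  · exact hd.deriv ▸ hm t (Ioo_subset_Icc_self ht) _ (hf.mem t (Ioo_subset_Icc_self ht))

lemma sub_le_mul_sub (hf : IsSolutionOn v S f a b) (hΛ : ∀ t ∈ Icc a b, ∀ y ∈ S, v t y ≤ Λ)
    {s₁ s₂ : ℝ} (hs₁ : s₁ ∈ Icc a b) (hs₂ : s₂ ∈ Icc a b) (h : s₁ ≤ s₂) :
    f s₂ - f s₁ ≤ Λ * (s₂ - s₁) := by
  have hneg : IsSolutionOn (fun t y => -v t (-y)) (-S) (-f) a b :=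
    ⟨fun t ht => by simpa using (hf.hasDerivAt t ht).neg, fun t ht => by simpa using hf.mem t ht⟩
  have := hneg.mul_sub_le_sub (m := -Λ) (fun t ht y hy => neg_le_neg (hΛ t ht _ hy)) hs₁ hs₂ h
  simp only [Pi.neg_apply] at this
  linarith

lemma abs_sub_le_mul_exp (hf : IsSolutionOn v S f a b) (hg : IsSolutionOn v S g a b)
    (hv : ∀ t ∈ Icc a b, LipschitzOnWith K (v t) S) :
    ∀ t ∈ Icc a b, |f t - g t| ≤ |f b - g b| * Real.exp (K * (b - t)) := by
  simpa [Real.dist_eq] using dist_le_of_trajectories_ODE_of_mem_left (s := fun _ => S)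
    (fun t ht => hv t (Ioc_subset_Icc_self ht)) hf.continuousOn
    (fun t ht => (hf.hasDerivAt t (Ioc_subset_Icc_self ht)).hasDerivWithinAt)
    (fun t ht => hf.mem t (Ioc_subset_Icc_self ht)) hg.continuousOn
    (fun t ht => (hg.hasDerivAt t (Ioc_subset_Icc_self ht)).hasDerivWithinAt)
    (fun t ht => hg.mem t (Ioc_subset_Icc_self ht)) le_rfl

/-- Solutions cannot cross: at a crossing time they agree, hence, by backward uniqueness, they
agree before it too. -/
lemma le_of_le_right (hf : IsSolutionOn v S f a b) (hg : IsSolutionOn v S g a b)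
    (hv : ∀ t ∈ Icc a b, LipschitzOnWith K (v t) S) (hab : a ≤ b) (hb : f b ≤ g b) :
    f a ≤ g a := by
  by_contra! hlt
  obtain ⟨c, hc, hfgc⟩ := intermediate_value_Icc' hab (hf.continuousOn.sub hg.continuousOn)
    ⟨sub_nonpos.2 hb, (sub_pos.2 hlt).le⟩
  have hsub : Icc a c ⊆ Icc a b := Icc_subset_Icc le_rfl hc.2
  have := ODE_solution_unique_of_mem_Icc_left (s := fun _ => S)
    (fun t ht => hv t (hsub (Ioc_subset_Icc_self ht))) (hf.continuousOn.mono hsub)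
    (fun t ht => (hf.hasDerivAt t (hsub (Ioc_subset_Icc_self ht))).hasDerivWithinAt)
    (fun t ht => hf.mem t (hsub (Ioc_subset_Icc_self ht))) (hg.continuousOn.mono hsub)
    (fun t ht => (hg.hasDerivAt t (hsub (Ioc_subset_Icc_self ht))).hasDerivWithinAt)
    (fun t ht => hg.mem t (hsub (Ioc_subset_Icc_self ht))) (sub_eq_zero.1 hfgc)
    (left_mem_Icc.2 hc.1)
  exact hlt.ne' this

end IsSolutionOn

section Characteristics

variable {v : ℝ → ℝ → ℝ} {S I : Set ℝ} {K : ℝ≥0} {m Λ : ℝ} {ξ ξt : ℝ → ℝ} {α αt t tt : ℝ}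

lemma start_le_start_of_end_le_end (hm : 0 < m) (hspeed : ∀ s ∈ I, ∀ y ∈ S, m ≤ v s y)
    (hlip : ∀ s ∈ I, LipschitzOnWith K (v s) S)
    (hξ : IsSolutionOn v S ξ α t) (hξt : IsSolutionOn v S ξt αt tt)
    (hI : Icc α t ⊆ I) (hIt : Icc αt tt ⊆ I) (hα : α ≤ t) (hαt : αt ≤ t) (htt : t ≤ tt)
    (hend : ξt tt = ξ t) (hξα : ξ α = 0) (hξtαt : ξt αt = 0) :
    α ≤ αt := by
  by_contra! hlt
  have hspeed' : ∀ s ∈ Icc αt tt, ∀ y ∈ S, m ≤ v s y := fun s hs => hspeed s (hIt hs)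
  have hpos : 0 < ξt α := by
    have := hξt.mul_sub_le_sub hspeed' ⟨le_rfl, hαt.trans htt⟩ ⟨hlt.le, hα.trans htt⟩ hlt.le
    nlinarith [mul_pos hm (sub_pos.2 hlt)]
  have hle : ξt t ≤ ξ t := by
    have := hξt.mul_sub_le_sub hspeed' ⟨hαt, htt⟩ ⟨hαt.trans htt, le_rfl⟩ htt
    nlinarith [mul_nonneg hm.le (sub_nonneg.2 htt)]
  have := (hξt.mono hlt.le htt).le_of_le_right hξ (fun s hs => hlip s (hI hs)) hα hle
  linarith

lemma abs_sub_le_of_end_le_end (hspeed : ∀ s ∈ I, ∀ y ∈ S, v s y ∈ Icc 0 Λ)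
    (hlip : ∀ s ∈ I, LipschitzOnWith K (v s) S)
    (hξ : IsSolutionOn v S ξ α t) (hξt : IsSolutionOn v S ξt αt tt)
    (hIt : Icc αt tt ⊆ I) (hααt : α ≤ αt) (hαt : αt ≤ t) (htt : t ≤ tt)
    (hend : ξt tt = ξ t) :
    ∀ s ∈ Icc αt t, |ξt s - ξ s| ≤ Λ * (tt - t) * Real.exp (K * (t - s)) := by
  have hspeed' (s) (hs : s ∈ Icc αt tt) (y) (hy : y ∈ S) := hspeed s (hIt hs) y hy
  have hgap : |ξt t - ξ t| ≤ Λ * (tt - t) := by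
    have hlow := hξt.mul_sub_le_sub (fun s hs y hy => (hspeed' s hs y hy).1)
      ⟨hαt, htt⟩ ⟨hαt.trans htt, le_rfl⟩ htt
    have hup := hξt.sub_le_mul_sub (fun s hs y hy => (hspeed' s hs y hy).2)
      ⟨hαt, htt⟩ ⟨hαt.trans htt, le_rfl⟩ htt
    rw [abs_le]
    constructor <;> linarith
  intro s hs
  refine ((hξt.mono le_rfl htt).abs_sub_le_mul_exp (hξ.mono hααt le_rfl)
    (fun s hs => hlip s (hIt ⟨hs.1, hs.2.trans htt⟩)) s hs).trans ?_
  gcongr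

lemma sub_le_of_end_lt_start (hm : 0 < m) (hspeed : ∀ s ∈ I, ∀ y ∈ S, v s y ∈ Icc m Λ)
    (hξ : IsSolutionOn v S ξ α t) (hξt : IsSolutionOn v S ξt αt tt)
    (hI : Icc α t ⊆ I) (hIt : Icc αt tt ⊆ I) (hα : α ≤ t) (hαt : αt ≤ tt) (hlate : t < αt)
    (hend : ξt tt = ξ t) (hξα : ξ α = 0) (hξtαt : ξt αt = 0) :
    αt - α ≤ (1 + Λ / m) * (tt - t) := by
  have hmΛ := hspeed α (hI ⟨le_rfl, hα⟩) _ (hξ.mem α ⟨le_rfl, hα⟩)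
  have hrise := hξ.mul_sub_le_sub (fun s hs y hy => (hspeed s (hI hs) y hy).1) ⟨le_rfl, hα⟩
    ⟨hα, le_rfl⟩ hα
  have hrise' := hξt.sub_le_mul_sub (fun s hs y hy => (hspeed s (hIt hs) y hy).2) ⟨le_rfl, hαt⟩
    ⟨hαt, le_rfl⟩ hαt
  rw [hξα, sub_zero] at hrise
  rw [hξtαt, sub_zero, hend] at hrise'
  have : t - α ≤ Λ / m * (tt - t) := by
    rw [div_mul_eq_mul_div, le_div_iff₀ hm]
    nlinarith [hmΛ.1, hmΛ.2]
  linarith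

theorem characteristics_lipschitz_in_end_time {T : ℝ} (hm : 0 < m)
    (hspeed : ∀ s ∈ Icc 0 T, ∀ y ∈ S, v s y ∈ Icc m Λ)
    (hlip : ∀ s ∈ Icc 0 T, LipschitzOnWith K (v s) S)
    (hξ : IsSolutionOn v S ξ α t) (hξt : IsSolutionOn v S ξt αt tt)
    (hα₀ : 0 ≤ α) (hαt₀ : 0 ≤ αt) (hα : α ≤ t) (hαt : αt ≤ tt) (htt : t ≤ tt)
    (hT : tt ≤ T) (hend : ξt tt = ξ t) (hξα : ξ α = 0) (hξtαt : ξt αt = 0) :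
    (∀ s ∈ Icc αt t, |ξt s - ξ s| ≤ Λ * Real.exp (K * T) * (tt - t)) ∧
      |αt - α| ≤ (1 + Λ * Real.exp (K * T) / m) * (tt - t) := by
  set E := Λ * Real.exp (K * T)
  have hI : Icc α t ⊆ Icc 0 T := Icc_subset_Icc hα₀ (htt.trans hT)
  have hIt : Icc αt tt ⊆ Icc 0 T := Icc_subset_Icc hαt₀ hT
  have hlow (s) (hs : s ∈ Icc 0 T) (y) (hy : y ∈ S) : m ≤ v s y := (hspeed s hs y hy).1
  have hup (s) (hs : s ∈ Icc 0 T) (y) (hy : y ∈ S) : v s y ≤ Λ := (hspeed s hs y hy).2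
  have hmΛ : m ≤ Λ :=
    have hα' := hspeed α (hI ⟨le_rfl, hα⟩) _ (hξ.mem α ⟨le_rfl, hα⟩)
    hα'.1.trans hα'.2
  have hΛE : Λ ≤ E := le_mul_of_one_le_right (hm.le.trans hmΛ)
    (Real.one_le_exp (mul_nonneg K.2 (hαt₀.trans (hαt.trans hT))))
  rcases le_or_gt αt t with hαt' | hαt'
  · have hααt := start_le_start_of_end_le_end hm hlow hlip hξ hξt hI hIt hα hαt' htt
      hend hξα hξtαt
    have hgron := abs_sub_le_of_end_le_end
      (fun s hs y hy => ⟨hm.le.trans (hlow s hs y hy), hup s hs y hy⟩) hlip hξ hξt hIt hααt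
      hαt' htt hend
    have hbound (s) (hs : s ∈ Icc αt t) : |ξt s - ξ s| ≤ E * (tt - t) := by
      have hexp : Real.exp (K * (t - s)) ≤ Real.exp (K * T) := by
        gcongr
        linarith [hs.1, hs.2]
      calc |ξt s - ξ s| ≤ Λ * (tt - t) * Real.exp (K * (t - s)) := hgron s hs
        _ ≤ Λ * (tt - t) * Real.exp (K * T) :=
          mul_le_mul_of_nonneg_left hexp (mul_nonneg (hm.le.trans hmΛ) (sub_nonneg.2 htt))
        _ = E * (tt - t) := by ring
    refine ⟨hbound, ?_⟩
    have hgap := hbound αt ⟨le_rfl, hαt'⟩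
    rw [hξtαt, zero_sub, abs_neg] at hgap
    have hrise := hξ.mul_sub_le_sub (fun s hs => hlow s (hI hs)) ⟨le_rfl, hα⟩
      ⟨hααt, hαt'⟩ hααt
    rw [hξα, sub_zero] at hrise
    have : αt - α ≤ E / m * (tt - t) := by
      rw [div_mul_eq_mul_div, le_div_iff₀ hm]
      nlinarith [le_abs_self (ξ αt)]
    rw [abs_of_nonneg (sub_nonneg.2 hααt)]
    nlinarith
  · refine ⟨fun s hs => absurd (hs.1.trans hs.2) hαt'.not_ge, ?_⟩
    rw [abs_of_nonneg (by linarith)]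
    refine (sub_le_of_end_lt_start hm hspeed hξ hξt hI hIt hα hαt hαt' hend hξα hξtαt).trans ?_
    gcongr

end Characteristics

theorem characteristic_time_continuity_general
    (lam : ℝ → ℝ → ℝ) (hlam : VelocityHyp lam)
    (M δ : ℝ) (hM : 0 < M) :
    ∃ C > 0, ∀ W : ℝ → ℝ, ContinuousOn W (Icc 0 δ) →
      (∀ s ∈ Icc (0:ℝ) δ, W s ∈ Icc (0:ℝ) M) →
      ∀ t tt : ℝ, t ∈ Icc (0:ℝ) δ → tt ∈ Icc (0:ℝ) δ → t ≤ tt →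
      ∀ x ∈ Icc (0:ℝ) 1, ∀ ξ ξt : ℝ → ℝ, ∀ α αt : ℝ,
        α ∈ Icc (0:ℝ) t → αt ∈ Icc (0:ℝ) tt →
        (∀ s ∈ Icc α t, HasDerivAt ξ (lam (ξ s) (W s)) s) →
        ξ t = x → ξ α = 0 → (∀ s ∈ Icc α t, ξ s ∈ Icc (0:ℝ) 1) →
        (∀ s ∈ Icc αt tt, HasDerivAt ξt (lam (ξt s) (W s)) s) →
        ξt tt = x → ξt αt = 0 → (∀ s ∈ Icc αt tt, ξt s ∈ Icc (0:ℝ) 1) →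
        (∀ s ∈ Icc αt t, |ξt s - ξ s| ≤ C * |tt - t|) ∧ |αt - α| ≤ C * |tt - t| := by
  obtain ⟨m, hm, Λ, hspeed⟩ := hlam.exists_speed_bounds hM.le
  obtain ⟨K, hlip⟩ := hlam.exists_lipschitzOnWith M
  set E := Λ * Real.exp (K * δ)
  have hΛ := hspeed 0 (left_mem_Icc.2 zero_le_one) 0 (left_mem_Icc.2 hM.le)
  have hE : 0 ≤ E := mul_nonneg (by linarith [hΛ.1, hΛ.2]) (Real.exp_pos _).le
  have hEm : 0 ≤ E / m := div_nonneg hE hm.le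
  refine ⟨1 + E + E / m, by linarith, ?_⟩
  intro W _ hW t tt _ htt hle x _ ξ ξt α αt hα hαt hξ hξx hξα hξS hξt hξtx hξtαt hξtS
  obtain ⟨hclose, hhit⟩ := characteristics_lipschitz_in_end_time
    (v := fun s y => lam y (W s)) hm (fun s hs y hy => hspeed y hy _ (hW s hs))
    (fun s hs => hlip _ (hW s hs)) ⟨hξ, hξS⟩ ⟨hξt, hξtS⟩ hα.1 hαt.1 hα.2 hαt.2 hle htt.2
    (hξtx.trans hξx.symm) hξα hξtαt
  rw [abs_of_nonneg (sub_nonneg.2 hle)]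
  refine ⟨fun s hs => (hclose s hs).trans ?_, hhit.trans ?_⟩ <;>
    exact mul_le_mul_of_nonneg_right (by linarith) (sub_nonneg.2 hle)

/-- Continuity of backward characteristics (and of their
hitting times on the `t`-axis) with respect to the terminal time: there is a
constant `C`, depending only on `M`, `δ` and `λ` (not on `x`, `t`, `t̃`, nor on
the particular `W`), such that `sup_{s∈[α̃,t]} |ξ̃₃(s) − ξ₃(s)| ≤ C|t̃ − t|` and
`|α̃ − α| ≤ C|t̃ − t|`. -/
theorem characteristic_time_continuity
    (lam : ℝ → ℝ → ℝ) (hlam : VelocityHyp lam)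
    (M δ : ℝ) (hM : 0 < M) (hδ0 : 0 ≤ δ)
    (hδ : δ * lamxSup lam M ≤ 1 / 2) :
    ∃ C > 0, ∀ W : ℝ → ℝ, ContinuousOn W (Icc 0 δ) →
      (∀ s ∈ Icc (0:ℝ) δ, W s ∈ Icc (0:ℝ) M) →
      ∀ t tt : ℝ, t ∈ Icc (0:ℝ) δ → tt ∈ Icc (0:ℝ) δ → t ≤ tt →
      ∀ x ∈ Icc (0:ℝ) 1, ∀ ξ ξt : ℝ → ℝ, ∀ α αt : ℝ,
        α ∈ Icc (0:ℝ) t → αt ∈ Icc (0:ℝ) tt →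
        (∀ s ∈ Icc α t, HasDerivAt ξ (lam (ξ s) (W s)) s) →
        ξ t = x → ξ α = 0 → (∀ s ∈ Icc α t, ξ s ∈ Icc (0:ℝ) 1) →
        (∀ s ∈ Icc αt tt, HasDerivAt ξt (lam (ξt s) (W s)) s) →
        ξt tt = x → ξt αt = 0 → (∀ s ∈ Icc αt tt, ξt s ∈ Icc (0:ℝ) 1) →
        (∀ s ∈ Icc αt t, |ξt s - ξ s| ≤ C * |tt - t|) ∧ |αt - α| ≤ C * |tt - t| :=
  characteristic_time_continuity_general lam hlam M δ hM
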